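/- For fixed q > 0 and x > 0, define G(K) for K ∈ ℝ by G(K) = −√(q/(2π))·[((x − K)/x)·e^{−(x−K)²/(2q)} + (K/x)·e^{−K²/(2q)}] + ((x − K)² + q)/x · H((x − K)/√q) − (K² + q)/x · H(−K/√q). Then G is differentiable in K and dG/dK = −(2K/x)·H(−K/√q) − (2(x − K)/x)·H((x − K)/√q) − (2/x)·√(q/(2π))·(e^{−K²/(2q)} − e^{−(x−K)²/(2q)}). -/

import Mathlib

open Real MeasureTheory

lemma gauss_integrable' : Integrable (fun t : ℝ => Real.exp (-t ^ 2 / 2)) := by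
  have h := integrable_exp_neg_mul_sq (by norm_num : (0:ℝ) < 1/2)
  convert h using 2 with t
  ring

lemma hasDerivAt_tail' (z : ℝ) :
    HasDerivAt (fun y : ℝ => ∫ t in Set.Ioi y, Real.exp (-t ^ 2 / 2))
      (-Real.exp (-z ^ 2 / 2)) z := by
  have hint := gauss_integrable'
  have hcont : Continuous fun t : ℝ => Real.exp (-t ^ 2 / 2) := by continuity
  have h1 : ∀ y : ℝ, (∫ t in Set.Ioi y, Real.exp (-t ^ 2 / 2))
      = ((∫ t, Real.exp (-t ^ 2 / 2)) - (∫ t in Set.Iic (0:ℝ), Real.exp (-t ^ 2 / 2)))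
        - ∫ t in (0:ℝ)..y, Real.exp (-t ^ 2 / 2) := by
    intro y
    have ha : (∫ t in Set.Iic y, Real.exp (-t ^ 2 / 2))
        + (∫ t in Set.Ioi y, Real.exp (-t ^ 2 / 2)) = ∫ t, Real.exp (-t ^ 2 / 2) :=
      intervalIntegral.integral_Iic_add_Ioi hint.integrableOn hint.integrableOn
    have hb : (∫ t in Set.Iic y, Real.exp (-t ^ 2 / 2))
        - (∫ t in Set.Iic (0:ℝ), Real.exp (-t ^ 2 / 2))
        = ∫ t in (0:ℝ)..y, Real.exp (-t ^ 2 / 2) :=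
      intervalIntegral.integral_Iic_sub_Iic hint.integrableOn hint.integrableOn
    linarith
  have hd : HasDerivAt (fun y : ℝ => ∫ t in (0:ℝ)..y, Real.exp (-t ^ 2 / 2))
      (Real.exp (-z ^ 2 / 2)) z :=
    intervalIntegral.integral_hasDerivAt_right hint.intervalIntegrable
      (hcont.stronglyMeasurableAtFilter _ _) hcont.continuousAt
  simp only [h1]
  exact ((hasDerivAt_const z _).sub hd).congr_deriv (by ring)

lemma hasDerivAt_H' (H : ℝ → ℝ)
    (hH : ∀ z, H z = (1 / Real.sqrt (2 * π)) * ∫ t in Set.Ioi z, Real.exp (-t ^ 2 / 2))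
    (z : ℝ) :
    HasDerivAt H (-(1 / Real.sqrt (2 * π)) * Real.exp (-z ^ 2 / 2)) z := by
  have : H = fun y => (1 / Real.sqrt (2 * π)) * ∫ t in Set.Ioi y, Real.exp (-t ^ 2 / 2) :=
    funext hH
  rw [this]
  simpa [mul_comm, neg_mul, mul_neg] using (hasDerivAt_tail' z).const_mul (1 / Real.sqrt (2 * π))

/-- Derivative in the effective margin K of the energetic term G(K) of the
replica free energy:
dG/dK = −(2K/x)H(−K/√q) − (2(x−K)/x)H((x−K)/√q) − (2/x)√(q/(2π))(e^{−K²/(2q)} − e^{−(x−K)²/(2q)}). -/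
theorem energetic_term_deriv_K
    (q x : ℝ) (hq : 0 < q) (hx : 0 < x)
    (H G : ℝ → ℝ)
    (hH : ∀ z, H z = (1 / Real.sqrt (2 * π)) * ∫ t in Set.Ioi z, Real.exp (-t ^ 2 / 2))
    (hG : ∀ K : ℝ, G K
      = -Real.sqrt (q / (2 * π))
          * ((x - K) / x * Real.exp (-(x - K) ^ 2 / (2 * q))
             + K / x * Real.exp (-K ^ 2 / (2 * q)))
        + ((x - K) ^ 2 + q) / x * H ((x - K) / Real.sqrt q)
        - (K ^ 2 + q) / x * H (-K / Real.sqrt q)) :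
    ∀ K : ℝ,
      HasDerivAt G
        (-(2 * K / x) * H (-K / Real.sqrt q)
          - 2 * (x - K) / x * H ((x - K) / Real.sqrt q)
          - (2 / x) * Real.sqrt (q / (2 * π))
              * (Real.exp (-K ^ 2 / (2 * q)) - Real.exp (-(x - K) ^ 2 / (2 * q)))) K := by
  intro K
  have hGf : G = fun K => -Real.sqrt (q / (2 * π))
          * ((x - K) / x * Real.exp (-(x - K) ^ 2 / (2 * q))
             + K / x * Real.exp (-K ^ 2 / (2 * q)))
        + ((x - K) ^ 2 + q) / x * H ((x - K) / Real.sqrt q)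
        - (K ^ 2 + q) / x * H (-K / Real.sqrt q) := funext hG
  have hqne : q ≠ 0 := hq.ne'
  have hxne : x ≠ 0 := hx.ne'
  have hsq : (0:ℝ) < Real.sqrt q := Real.sqrt_pos.2 hq
  have hsπ : (0:ℝ) < Real.sqrt (2 * π) := Real.sqrt_pos.2 (by positivity)
  -- inner linear functions
  have hsub : HasDerivAt (fun K : ℝ => x - K) (-1) K := by
    simpa using (hasDerivAt_id K).const_sub x
  -- exponentials
  have hA : HasDerivAt (fun K : ℝ => Real.exp (-(x - K) ^ 2 / (2 * q)))
      (Real.exp (-(x - K) ^ 2 / (2 * q)) * ((x - K) / q)) K := by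
    have h1 : HasDerivAt (fun K : ℝ => -(x - K) ^ 2 / (2 * q)) ((x - K) / q) K := by
      have h2 := ((hsub.pow 2).neg).div_const (2 * q)
      refine h2.congr_deriv ?_
      field_simp
      ring
    simpa [mul_comm] using h1.exp
  have hB : HasDerivAt (fun K : ℝ => Real.exp (-K ^ 2 / (2 * q)))
      (Real.exp (-K ^ 2 / (2 * q)) * (-K / q)) K := by
    have h1 : HasDerivAt (fun K : ℝ => -K ^ 2 / (2 * q)) (-K / q) K := by
      have h2 := (((hasDerivAt_id K).pow 2).neg).div_const (2 * q)
      refine h2.congr_deriv ?_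
      simp only [id]
      field_simp
      ring
    simpa [mul_comm] using h1.exp
  -- H compositions
  have hH1 : HasDerivAt (fun K : ℝ => H ((x - K) / Real.sqrt q))
      (1 / (Real.sqrt (2 * π) * Real.sqrt q) * Real.exp (-(x - K) ^ 2 / (2 * q))) K := by
    have hin : HasDerivAt (fun K : ℝ => (x - K) / Real.sqrt q) (-1 / Real.sqrt q) K :=
      hsub.div_const _
    have hout := hasDerivAt_H' H hH ((x - K) / Real.sqrt q)
    have harg : -((x - K) / Real.sqrt q) ^ 2 / 2 = -(x - K) ^ 2 / (2 * q) := by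
      rw [div_pow, Real.sq_sqrt hq.le]; ring
    have h := hout.comp K hin
    rw [harg] at h
    refine h.congr_deriv ?_
    ring
  have hH2 : HasDerivAt (fun K : ℝ => H (-K / Real.sqrt q))
      (1 / (Real.sqrt (2 * π) * Real.sqrt q) * Real.exp (-K ^ 2 / (2 * q))) K := by
    have hin : HasDerivAt (fun K : ℝ => -K / Real.sqrt q) (-1 / Real.sqrt q) K :=
      ((hasDerivAt_id K).neg).div_const _
    have hout := hasDerivAt_H' H hH (-K / Real.sqrt q)
    have harg : -(-K / Real.sqrt q) ^ 2 / 2 = -K ^ 2 / (2 * q) := by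
      rw [div_pow, neg_pow, Real.sq_sqrt hq.le]; ring
    have h := hout.comp K hin
    rw [harg] at h
    refine h.congr_deriv ?_
    ring
  -- polynomial coefficient functions
  have hc1 : HasDerivAt (fun K : ℝ => (x - K) / x) (-1 / x) K := hsub.div_const _
  have hc2 : HasDerivAt (fun K : ℝ => K / x) (1 / x) K := (hasDerivAt_id K).div_const _
  have hc3 : HasDerivAt (fun K : ℝ => ((x - K) ^ 2 + q) / x)
      ((2 * (x - K) ^ 1 * -1) / x) K := (((hsub.pow 2)).add_const q).div_const _
  have hc4 : HasDerivAt (fun K : ℝ => (K ^ 2 + q) / x)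
      ((2 * K ^ 1 * 1) / x) K := ((((hasDerivAt_id K).pow 2)).add_const q).div_const _
  have hbig := ((((hc1.mul hA).add (hc2.mul hB)).const_mul
      (-Real.sqrt (q / (2 * π)))).add (hc3.mul hH1)).sub (hc4.mul hH2)
  rw [hGf]
  refine hbig.congr_deriv ?_
  clear hbig hGf hG hH hA hB hH1 hH2 hc1 hc2 hc3 hc4 hsub
  obtain ⟨s, hs0, rfl⟩ : ∃ s, 0 < s ∧ q = s ^ 2 :=
    ⟨Real.sqrt q, hsq, (Real.sq_sqrt hq.le).symm⟩
  have h1 : Real.sqrt (s ^ 2 / (2 * π)) = s / Real.sqrt (2 * π) := by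
    rw [Real.sqrt_div (by positivity), Real.sqrt_sq hs0.le]
  rw [h1]
  simp only [Real.sqrt_sq hs0.le]
  set A := Real.exp (-(x - K) ^ 2 / (2 * s ^ 2))
  set B := Real.exp (-K ^ 2 / (2 * s ^ 2))
  field_simp
  ring
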